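/- Let ρ > 1, Q > 0, and let integers M ≤ N be given with N ≥ 1. Let f be given on [-1, (ρ+ρ⁻¹)/2) by a Chebyshev series f(x) = Σ_{n≥0} a_n T_n(x) with |a_0| ≤ Q and |a_n| ≤ 2Q ρ^{-n} for n ≥ 1 (the series converges absolutely on this interval). Let c ∈ ℝ^{M+1} solve the (unperturbed) normal equations T_M(x^{equi})ᵀ T_M(x^{equi}) c = T_M(x^{equi})ᵀ f(x^{equi}) and set p_M(x) = Σ_{k=0}^M c_k T_k(x). Then for every x with 1 < x < (ρ+ρ⁻¹)/2, writing r = (x + √(x²−1))/ρ (so r < 1), |f(x) − p_M(x)| ≤ 2Q [ (N+1)^{1/2}(M+1) / (σ_{M+1}(T_M(x^{equi}))(ρ−1)) + r/(1−r) ] r^M. -/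

import Mathlib

open Matrix MeasureTheory
open scoped BigOperators

/-- Chebyshev polynomial of the first kind `T_n`, as a function `ℝ → ℝ`. -/
noncomputable def cheb (n : ℕ) (x : ℝ) : ℝ :=
  (Polynomial.Chebyshev.T ℝ (n : ℤ)).eval x

/-- The equally spaced grid `x_k = 2k/N - 1`, `k = 0, …, N`, on `[-1,1]`. -/
noncomputable def xequi (N : ℕ) (k : Fin (N + 1)) : ℝ :=
  2 * (k : ℝ) / (N : ℝ) - 1

/-- The `(N+1) × (M+1)` Chebyshev–Vandermonde matrix at the equally spaced grid. -/
noncomputable def chebVand (N M : ℕ) : Matrix (Fin (N + 1)) (Fin (M + 1)) ℝ :=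
  Matrix.of fun i j => cheb (j : ℕ) (xequi N i)

/-- The Euclidean norm of a vector in `ℝ^n`. -/
noncomputable def enorm2 {n : ℕ} (v : Fin n → ℝ) : ℝ :=
  Real.sqrt (∑ i, (v i) ^ 2)

/-- The smallest singular value of a matrix, as the infimum of `‖A v‖₂` over unit vectors. -/
noncomputable def sigmaMin {m n : ℕ} (A : Matrix (Fin m) (Fin n) ℝ) : ℝ :=
  sInf {r | ∃ v : Fin n → ℝ, enorm2 v = 1 ∧ r = enorm2 (A.mulVec v)}

/-- The largest singular value of a matrix, as the supremum of `‖A v‖₂` over unit vectors. -/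
noncomputable def sigmaMax {m n : ℕ} (A : Matrix (Fin m) (Fin n) ℝ) : ℝ :=
  sSup {r | ∃ v : Fin n → ℝ, enorm2 v = 1 ∧ r = enorm2 (A.mulVec v)}

/-!
Let `a'` be the coefficients `a 0, …, a M` and `A = T_M(x^equi)`. The normal equations are linear
in the data, so `c - a'` is the least-squares solution for the sampled tail
`τ = f - ∑_{k ≤ M} a_k T_k`; hence `σ_{M+1} ‖c - a'‖ ≤ ‖A (c - a')‖ ≤ ‖τ(x^equi)‖`, and since
`|T_n| ≤ 1` on `[-1, 1]` every entry of `τ(x^equi)` is at most `2Q ρ^{-M} / (ρ - 1)`. At `x > 1`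
we have `|T_n(x)| ≤ (x + √(x² - 1))^n = (rρ)^n`, so the tail at `x` is a geometric series bounded by
`2Q r^{M+1} / (1 - r)`, while `|∑_{k ≤ M} (c_k - a_k) T_k(x)| ≤ (M + 1) (rρ)^M ‖c - a'‖`.
-/

section Chebyshev

open Polynomial.Chebyshev Real

lemma abs_cheb_le_one (n : ℕ) {x : ℝ} (hx : x ∈ Set.Icc (-1) 1) : |cheb n x| ≤ 1 :=
  abs_eval_T_real_le_one _ (abs_le.mpr hx)

lemma abs_cheb_le_pow (n : ℕ) {x : ℝ} (hx : 1 ≤ x) : |cheb n x| ≤ (x + √(x ^ 2 - 1)) ^ n := by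
  have hθ : 0 ≤ (n : ℝ) * arcosh x := mul_nonneg n.cast_nonneg (arcosh_nonneg hx)
  rw [cheb, ← cosh_arcosh hx, T_real_cosh, cosh_arcosh hx, ← exp_arcosh hx, ← exp_nat_mul,
    abs_of_pos (cosh_pos _), cosh_eq]
  push_cast
  linarith [exp_le_one_iff.mpr (neg_nonpos.mpr hθ), one_le_exp hθ]

lemma add_sqrt_sq_sub_one_lt {ρ x : ℝ} (hρ : 1 ≤ ρ) (hx : x < (ρ + ρ⁻¹) / 2) :
    x + √(x ^ 2 - 1) < ρ := by
  have hρx : 2 * ρ * x < ρ ^ 2 + 1 := by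
    have := mul_lt_mul_of_pos_left hx (by linarith : (0 : ℝ) < 2 * ρ)
    field_simp at this
    linarith
  have hxρ : x < ρ := by nlinarith
  have : √(x ^ 2 - 1) < ρ - x := (sqrt_lt' (by linarith)).mpr (by nlinarith)
  linarith

end Chebyshev

lemma enorm2_nonneg {n : ℕ} (v : Fin n → ℝ) : 0 ≤ enorm2 v := Real.sqrt_nonneg _

lemma abs_le_enorm2 {n : ℕ} (v : Fin n → ℝ) (k : Fin n) : |v k| ≤ enorm2 v := by
  rw [← Real.sqrt_sq_eq_abs]
  exact Real.sqrt_le_sqrt (Finset.single_le_sum (fun i _ => sq_nonneg (v i)) (Finset.mem_univ k))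

lemma enorm2_le_sqrt_card_mul {n : ℕ} {v : Fin n → ℝ} {B : ℝ} (hB : 0 ≤ B)
    (hv : ∀ i, |v i| ≤ B) : enorm2 v ≤ √n * B := by
  have hsq : ∑ i, v i ^ 2 ≤ n * B ^ 2 := by
    simpa using Finset.sum_le_sum fun i (_ : i ∈ Finset.univ) =>
      (sq_le_sq₀ (abs_nonneg _) hB).mpr (hv i)
  exact (Real.sqrt_le_sqrt hsq).trans_eq (by rw [Real.sqrt_mul n.cast_nonneg, Real.sqrt_sq hB])

lemma abs_sub_sum_range_le_of_abs_le_geometric {u : ℕ → ℝ} {F C r : ℝ} {m : ℕ}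
    (hu : HasSum u F) (hr₀ : 0 ≤ r) (hr₁ : r < 1) (hbound : ∀ n, m ≤ n → |u n| ≤ C * r ^ n) :
    |F - ∑ k ∈ Finset.range m, u k| ≤ C * r ^ m / (1 - r) := by
  have htail : HasSum (fun n => u (n + m)) (F - ∑ k ∈ Finset.range m, u k) :=
    (hasSum_nat_add_iff' m).mpr hu
  have hgeom : HasSum (fun n => C * r ^ m * r ^ n) (C * r ^ m / (1 - r)) := by
    simpa [div_eq_mul_inv] using (hasSum_geometric_of_lt_one hr₀ hr₁).mul_left (C * r ^ m)
  refine htail.norm_le_of_bounded hgeom fun n => ?_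
  rw [Real.norm_eq_abs, mul_assoc, ← pow_add, add_comm m]
  exact hbound _ (Nat.le_add_left m n)

noncomputable def chebSum {n : ℕ} (c : Fin n → ℝ) (x : ℝ) : ℝ :=
  ∑ k, c k * cheb k x

lemma chebSum_sub {n : ℕ} (c b : Fin n → ℝ) (x : ℝ) :
    chebSum (c - b) x = chebSum c x - chebSum b x := by
  simp only [chebSum, Pi.sub_apply, sub_mul, Finset.sum_sub_distrib]

lemma chebVand_mulVec (N M : ℕ) (c : Fin (M + 1) → ℝ) :
    chebVand N M *ᵥ c = fun i => chebSum c (xequi N i) := by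
  ext i
  simp only [mulVec, dotProduct, chebVand, of_apply, chebSum, mul_comm]

lemma abs_chebSum_le {M : ℕ} (c : Fin (M + 1) → ℝ) {x : ℝ} (hx : 1 ≤ x) :
    |chebSum c x| ≤ (M + 1) * (x + √(x ^ 2 - 1)) ^ M * enorm2 c := by
  have hs : 1 ≤ x + √(x ^ 2 - 1) := by linarith [Real.sqrt_nonneg (x ^ 2 - 1)]
  calc |chebSum c x| ≤ ∑ k : Fin (M + 1), |c k| * |cheb k x| := by
        simpa only [chebSum, abs_mul] using
          Finset.abs_sum_le_sum_abs (fun k => c k * cheb k x) Finset.univ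
    _ ≤ ∑ _k : Fin (M + 1), enorm2 c * (x + √(x ^ 2 - 1)) ^ M := by
        refine Finset.sum_le_sum fun k _ => mul_le_mul (abs_le_enorm2 c k) ?_ (abs_nonneg _)
          (enorm2_nonneg c)
        exact (abs_cheb_le_pow k hx).trans (pow_le_pow_right₀ hs (Nat.lt_succ_iff.mp k.isLt))
    _ = (M + 1) * (x + √(x ^ 2 - 1)) ^ M * enorm2 c := by
        simp only [Finset.sum_const, Finset.card_univ, Fintype.card_fin, nsmul_eq_mul]
        push_cast
        ring

lemma abs_sub_chebSum_le {ρ Q s x F : ℝ} {a : ℕ → ℝ} (hρ : 0 < ρ)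
    (ha : ∀ n : ℕ, 1 ≤ n → |a n| ≤ 2 * Q * ρ ^ (-(n : ℤ)))
    (hF : HasSum (fun n => a n * cheb n x) F) (hs : 0 ≤ s) (hsρ : s < ρ)
    (hT : ∀ n, |cheb n x| ≤ s ^ n) (M : ℕ) :
    |F - chebSum (fun k : Fin (M + 1) => a k) x| ≤ 2 * Q * (s / ρ) ^ (M + 1) / (1 - s / ρ) := by
  rw [chebSum, Fin.sum_univ_eq_sum_range (fun k => a k * cheb k x)]
  refine abs_sub_sum_range_le_of_abs_le_geometric hF (div_nonneg hs hρ.le)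
    ((div_lt_one hρ).mpr hsρ) fun n hn => ?_
  calc |a n * cheb n x| ≤ 2 * Q * ρ ^ (-(n : ℤ)) * s ^ n := by
        rw [abs_mul]
        have han := ha n (by omega)
        exact mul_le_mul han (hT n) (abs_nonneg _) ((abs_nonneg _).trans han)
    _ = 2 * Q * (s / ρ) ^ n := by
        rw [_root_.zpow_neg, zpow_natCast, div_pow]
        ring

lemma enorm2_eq_norm {n : ℕ} (v : Fin n → ℝ) : enorm2 v = ‖WithLp.toLp 2 v‖ := by
  simp only [enorm2, EuclideanSpace.norm_eq, Real.norm_eq_abs, sq_abs]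

lemma enorm2_sq {n : ℕ} (v : Fin n → ℝ) : enorm2 v ^ 2 = v ⬝ᵥ v := by
  rw [enorm2, Real.sq_sqrt (Finset.sum_nonneg fun i _ => sq_nonneg (v i))]
  simp only [dotProduct, sq]

/-- The residual `A c - y` is orthogonal to the range of `A`, so `A (c - b)` is the orthogonal
projection of `y - A b` onto that range. -/
lemma enorm2_mulVec_sub_le_of_normal_eq {m n : ℕ} (A : Matrix (Fin m) (Fin n) ℝ)
    {c : Fin n → ℝ} {y : Fin m → ℝ} (hc : (Aᵀ * A) *ᵥ c = Aᵀ *ᵥ y) (b : Fin n → ℝ) :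
    enorm2 (A *ᵥ (c - b)) ≤ enorm2 (y - A *ᵥ b) := by
  set u := A *ᵥ (c - b)
  set e := y - A *ᵥ b
  have hnormal : Aᵀ *ᵥ u = Aᵀ *ᵥ e := by
    simp only [u, e, mulVec_sub, mulVec_mulVec, hc]
  have hadj : ∀ w, w ⬝ᵥ u = (Aᵀ *ᵥ w) ⬝ᵥ (c - b) := fun w => by
    rw [mulVec_transpose, ← dotProduct_mulVec]
  have horth : u ⬝ᵥ u = u ⬝ᵥ e := by
    rw [hadj, hnormal, ← hadj, dotProduct_comm]
  have hcs : u ⬝ᵥ e ≤ enorm2 u * enorm2 e := Real.sum_mul_le_sqrt_mul_sqrt _ u e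
  have hu := enorm2_nonneg u
  have he := enorm2_nonneg e
  nlinarith [enorm2_sq u]

lemma sigmaMin_mul_enorm2_le {m n : ℕ} (A : Matrix (Fin m) (Fin n) ℝ) (v : Fin n → ℝ) :
    sigmaMin A * enorm2 v ≤ enorm2 (A *ᵥ v) := by
  rcases (enorm2_nonneg v).eq_or_lt with hv | hv
  · rw [← hv, mul_zero]
    exact enorm2_nonneg _
  have hunit : enorm2 ((enorm2 v)⁻¹ • v) = 1 := by
    rw [enorm2_eq_norm, WithLp.toLp_smul, norm_smul, ← enorm2_eq_norm, Real.norm_eq_abs,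
      abs_inv, abs_of_pos hv, inv_mul_cancel₀ hv.ne']
  have hle : sigmaMin A ≤ enorm2 (A *ᵥ ((enorm2 v)⁻¹ • v)) :=
    csInf_le ⟨0, fun r ⟨w, _, hw⟩ => hw ▸ enorm2_nonneg _⟩ ⟨_, hunit, rfl⟩
  rw [mulVec_smul, enorm2_eq_norm, WithLp.toLp_smul, norm_smul, ← enorm2_eq_norm,
    Real.norm_eq_abs, abs_inv, abs_of_pos hv] at hle
  rwa [le_inv_mul_iff₀ hv, mul_comm] at hle

lemma sigmaMin_pos {m n : ℕ} (A : Matrix (Fin m) (Fin (n + 1)) ℝ)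
    (hA : Function.Injective A.mulVec) : 0 < sigmaMin A := by
  have hinj : Function.Injective (Matrix.toLpLin 2 2 A) := fun u w h =>
    WithLp.ofLp_injective 2 (hA (congrArg WithLp.ofLp h))
  obtain ⟨K, hK, hanti⟩ := (Matrix.toLpLin 2 2 A).injective_iff_antilipschitz.mp hinj
  have hbound : ∀ v : Fin (n + 1) → ℝ, enorm2 v = 1 → (K : ℝ)⁻¹ ≤ enorm2 (A *ᵥ v) := by
    intro v hv
    have := ZeroHomClass.bound_of_antilipschitz (Matrix.toLpLin 2 2 A) hanti (WithLp.toLp 2 v)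
    rw [← enorm2_eq_norm, hv, toLpLin_toLp, ← enorm2_eq_norm] at this
    rwa [inv_le_iff_one_le_mul₀' (by exact_mod_cast hK)]
  have hunit : enorm2 (Pi.single 0 1 : Fin (n + 1) → ℝ) = 1 := by
    simp [enorm2_eq_norm]
  refine (inv_pos.mpr (by exact_mod_cast hK)).trans_le (le_csInf ⟨_, _, hunit, rfl⟩ ?_)
  rintro r ⟨v, hv, rfl⟩
  exact hbound v hv

lemma xequi_mem_Icc (N : ℕ) (i : Fin (N + 1)) : xequi N i ∈ Set.Icc (-1) 1 := by
  rcases N.eq_zero_or_pos with rfl | hN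
  · simp [xequi]
  have hi : (i : ℝ) ≤ N := by exact_mod_cast Nat.lt_succ_iff.mp i.isLt
  have hN' : (0 : ℝ) < N := by exact_mod_cast hN
  constructor
  · have : 0 ≤ 2 * (i : ℝ) / N := by positivity
    unfold xequi; linarith
  · have : 2 * (i : ℝ) / N ≤ 2 := by rw [div_le_iff₀ hN']; linarith
    unfold xequi; linarith

lemma xequi_injective (N : ℕ) : Function.Injective (xequi N) := by
  rcases N.eq_zero_or_pos with rfl | hN
  · exact fun i j _ => Fin.ext (by omega)
  intro i j h
  have hN' : (N : ℝ) ≠ 0 := by positivity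
  simp only [xequi, sub_left_inj, div_left_inj' hN'] at h
  exact Fin.ext (by exact_mod_cast mul_left_cancel₀ two_ne_zero h)

open Polynomial Polynomial.Chebyshev in
/-- `chebVand N M *ᵥ v` samples `∑ₖ v k T_k`, of degree `≤ M`, at `N + 1 > M` distinct nodes;
and the `T_k` are linearly independent because their degrees are distinct. -/
lemma chebVand_mulVec_injective {N M : ℕ} (hMN : M ≤ N) :
    Function.Injective (chebVand N M).mulVec := by
  suffices hker : ∀ v, chebVand N M *ᵥ v = 0 → v = 0 from
    fun u w h => sub_eq_zero.mp (hker _ (by rw [mulVec_sub, h, sub_self]))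
  intro v hv
  set P : ℝ[X] := ∑ k : Fin (M + 1), v k • T ℝ (k : ℕ)
  have heval : ∀ i, P.eval (xequi N i) = 0 := fun i => by
    simpa [P, eval_finsetSum, chebVand_mulVec, chebSum, cheb] using congrFun hv i
  have hdeg : P.natDegree < Fintype.card (Fin (N + 1)) := by
    refine (natDegree_sum_le_of_forall_le _ _ (n := M) fun k _ => ?_).trans_lt (by simp; omega)
    exact (natDegree_smul_le _ _).trans (by simp; omega)
  have hP : P = 0 :=
    eq_zero_of_natDegree_lt_card_of_eval_eq_zero P (xequi_injective N) heval hdeg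
  have hindep : LinearIndependent ℝ fun k : Fin (M + 1) => T ℝ (k : ℕ) :=
    (chebyshevTsequence ℝ).linearIndependent.comp _ Fin.val_injective
  exact funext (Fintype.linearIndependent_iff.mp hindep v hP)

lemma enorm2_sample_sub_chebVand_mulVec_le {ρ Q : ℝ} {f : ℝ → ℝ} {a : ℕ → ℝ} (hρ : 1 < ρ)
    (hQ : 0 ≤ Q) (hf : ∀ x ∈ Set.Icc (-1 : ℝ) 1, HasSum (fun n => a n * cheb n x) (f x))
    (ha : ∀ n : ℕ, 1 ≤ n → |a n| ≤ 2 * Q * ρ ^ (-(n : ℤ))) (N M : ℕ) :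
    enorm2 ((fun i => f (xequi N i)) - chebVand N M *ᵥ fun k => a k) ≤
      √((N : ℝ) + 1) * (2 * Q * (1 / ρ) ^ (M + 1) / (1 - 1 / ρ)) := by
  have hρ₀ : 0 < ρ := by linarith
  have : 0 < 1 - 1 / ρ := by linarith [(div_lt_one hρ₀).mpr hρ]
  rw [← Nat.cast_succ, chebVand_mulVec]
  refine enorm2_le_sqrt_card_mul (by positivity) fun i => ?_
  exact abs_sub_chebSum_le hρ₀ ha (hf _ (xequi_mem_Icc N i)) zero_le_one hρ
    (fun n => by rw [one_pow]; exact abs_cheb_le_one n (xequi_mem_Icc N i)) M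

theorem noiseless_extrapolation_general (ρ Q : ℝ) (hρ : 1 < ρ) (hQ : 0 < Q)
    (M N : ℕ) (hMN : M ≤ N)
    (f : ℝ → ℝ) (a : ℕ → ℝ)
    (hf : ∀ x ∈ Set.Ico (-1 : ℝ) ((ρ + ρ⁻¹) / 2),
      HasSum (fun n : ℕ => a n * cheb n x) (f x))
    (ha : ∀ n : ℕ, 1 ≤ n → |a n| ≤ 2 * Q * ρ ^ (-(n : ℤ)))
    (c : Fin (M + 1) → ℝ)
    (hc : ((chebVand N M).transpose * chebVand N M) *ᵥ c =
      (chebVand N M).transpose *ᵥ (fun i => f (xequi N i))) :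
    ∀ x ∈ Set.Ioo (1 : ℝ) ((ρ + ρ⁻¹) / 2),
      |f x - ∑ k : Fin (M + 1), c k * cheb (k : ℕ) x| ≤
        2 * Q * (Real.sqrt ((N : ℝ) + 1) * ((M : ℝ) + 1) /
              (sigmaMin (chebVand N M) * (ρ - 1)) +
            ((x + Real.sqrt (x ^ 2 - 1)) / ρ) / (1 - (x + Real.sqrt (x ^ 2 - 1)) / ρ)) *
          ((x + Real.sqrt (x ^ 2 - 1)) / ρ) ^ M := by
  rintro x ⟨hx₁, hx₂⟩
  set s := x + √(x ^ 2 - 1)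
  have hsρ : s < ρ := add_sqrt_sq_sub_one_lt hρ.le hx₂
  set a' : Fin (M + 1) → ℝ := fun k => a k
  have htrunc : |f x - chebSum a' x| ≤ 2 * Q * (s / ρ) ^ (M + 1) / (1 - s / ρ) :=
    abs_sub_chebSum_le (by linarith) ha (hf x ⟨by linarith, hx₂⟩) (by positivity) hsρ
      (fun n => abs_cheb_le_pow n hx₁.le) M
  have hcoef : sigmaMin (chebVand N M) * enorm2 (c - a') ≤
      √((N : ℝ) + 1) * (2 * Q * (1 / ρ) ^ (M + 1) / (1 - 1 / ρ)) :=
    (sigmaMin_mul_enorm2_le _ _).trans <| (enorm2_mulVec_sub_le_of_normal_eq _ hc a').trans <|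
      enorm2_sample_sub_chebVand_mulVec_le hρ hQ.le
        (fun y hy => hf y ⟨hy.1, by linarith [hy.2]⟩) ha N M
  have hσ : 0 < sigmaMin (chebVand N M) := sigmaMin_pos _ (chebVand_mulVec_injective hMN)
  change |f x - chebSum c x| ≤ _
  calc |f x - chebSum c x| ≤ |f x - chebSum a' x| + |chebSum (c - a') x| := by
        rw [chebSum_sub, abs_sub_comm (chebSum c x)]
        exact abs_sub_le _ _ _
    _ ≤ 2 * Q * (s / ρ) ^ (M + 1) / (1 - s / ρ) + (M + 1) * s ^ M * (√((N : ℝ) + 1) *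
          (2 * Q * (1 / ρ) ^ (M + 1) / (1 - 1 / ρ)) / sigmaMin (chebVand N M)) :=
        add_le_add htrunc ((abs_chebSum_le (c - a') hx₁.le).trans
          (mul_le_mul_of_nonneg_left ((le_div_iff₀ hσ).mpr (by linarith)) (by positivity)))
    _ = _ := by
        have : ρ - s ≠ 0 := by linarith
        have : ρ - 1 ≠ 0 := by linarith
        simp only [div_pow, one_pow]
        field_simp
        ring

/-- **Theorem 6.1 of the paper**: noiseless extrapolation. If `f(x) = Σ a_n T_n(x)`
with `|a_0| ≤ Q`, `|a_n| ≤ 2Qρ^{-n}` and `p_M = Σ c_k T_k` where `c` solves the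
unperturbed normal equations at `N+1` equally spaced points, then for
`1 < x < (ρ+ρ⁻¹)/2` and `r = (x+√(x²−1))/ρ`,
`|f(x) − p_M(x)| ≤ 2Q [√(N+1)(M+1)/(σ_{M+1}(ρ−1)) + r/(1−r)] r^M`. -/
theorem noiseless_extrapolation (ρ Q : ℝ) (hρ : 1 < ρ) (hQ : 0 < Q)
    (M N : ℕ) (hMN : M ≤ N) (hN : 1 ≤ N)
    (f : ℝ → ℝ) (a : ℕ → ℝ)
    (hf : ∀ x ∈ Set.Ico (-1 : ℝ) ((ρ + ρ⁻¹) / 2),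
      HasSum (fun n : ℕ => a n * cheb n x) (f x))
    (ha0 : |a 0| ≤ Q)
    (ha : ∀ n : ℕ, 1 ≤ n → |a n| ≤ 2 * Q * ρ ^ (-(n : ℤ)))
    (c : Fin (M + 1) → ℝ)
    (hc : ((chebVand N M).transpose * chebVand N M) *ᵥ c =
      (chebVand N M).transpose *ᵥ (fun i => f (xequi N i))) :
    ∀ x ∈ Set.Ioo (1 : ℝ) ((ρ + ρ⁻¹) / 2),
      |f x - ∑ k : Fin (M + 1), c k * cheb (k : ℕ) x| ≤
        2 * Q * (Real.sqrt ((N : ℝ) + 1) * ((M : ℝ) + 1) /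
              (sigmaMin (chebVand N M) * (ρ - 1)) +
            ((x + Real.sqrt (x ^ 2 - 1)) / ρ) / (1 - (x + Real.sqrt (x ^ 2 - 1)) / ρ)) *
          ((x + Real.sqrt (x ^ 2 - 1)) / ρ) ^ M :=
  noiseless_extrapolation_general ρ Q hρ hQ M N hMN f a hf ha c hc
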